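/- arXiv:math/0702677 — 2 statements merged into one kernel-verified Lean document; each statement's English description precedes it below -/
import Mathlib

section
/- φₙ is a filtered map from the skeletally filtered n-cube to the skeletally filtered n-globe: for every n ≥ 1, every k with 0 ≤ k < n, and every x ∈ Iⁿ such that |xᵢ| = 1 for at least n − k indices i, one has ‖φₙ(x)‖ = 1 and the j-th coordinate of φₙ(x) is 0 for every j ≤ n − k − 1; that is, φₙ(x) lies in the k-skeleton of the n-globe. -/
/-!
Both claims follow from closed forms for `φₙ` on the cube: by induction on `n`,
`1 - ‖φₙ(x)‖² = ∏ᵢ (1 - xᵢ²)` and `φₙ(x)ⱼ = xⱼ · √(∏_{i > j} (1 - xᵢ²))`, the induction step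
being the identity `1 - (t² (1 - r²) + r²) = (1 - t²)(1 - r²)` for `r = ‖φₙ₋₁(y)‖`. A coordinate `xᵢ = ±1` kills
the factor `1 - xᵢ²`, so `‖φₙ(x)‖ = 1` and every coordinate of `φₙ(x)` before `i` vanishes.
If at least `n - k` coordinates of `x` are `±1`, one of them has index greater than
any `j < n - k - 1`.
-/

/-- The comparison map φₙ : Iⁿ → Gⁿ, defined recursively by φ₁(x₁) = x₁ and
    φₙ(t, y) = (t·√(1 − ‖φₙ₋₁(y)‖²), φₙ₋₁(y)). -/
noncomputable def phi : (n : ℕ) → EuclideanSpace ℝ (Fin n) → EuclideanSpace ℝ (Fin n)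
  | 0, x => x
  | n + 1, x =>
    WithLp.toLp 2 (Fin.cons (x 0 * Real.sqrt (1 - ‖phi n (WithLp.toLp 2 fun i => x i.succ)‖ ^ 2))
        (phi n (WithLp.toLp 2 fun i => x i.succ)) : Fin (n + 1) → ℝ)

/-- The n-cube Iⁿ = [−1,1]ⁿ, inside Euclidean n-space. -/
def cube (n : ℕ) : Set (EuclideanSpace ℝ (Fin n)) := {x | ∀ i, |x i| ≤ 1}

/-- The n-disk Dⁿ = {x : ‖x‖ ≤ 1}, the underlying space of the n-globe Gⁿ. -/
def disk (n : ℕ) : Set (EuclideanSpace ℝ (Fin n)) := {x | ‖x‖ ≤ 1}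

open Finset

def tail {n : ℕ} (x : EuclideanSpace ℝ (Fin (n + 1))) : EuclideanSpace ℝ (Fin n) :=
  WithLp.toLp 2 fun i => x i.succ

@[simp]
lemma tail_apply {n : ℕ} (x : EuclideanSpace ℝ (Fin (n + 1))) (i : Fin n) :
    tail x i = x i.succ :=
  rfl

lemma tail_mem_cube {n : ℕ} {x : EuclideanSpace ℝ (Fin (n + 1))} (hx : x ∈ cube (n + 1)) :
    tail x ∈ cube n :=
  fun i => hx i.succ

lemma phi_succ_apply_zero (n : ℕ) (x : EuclideanSpace ℝ (Fin (n + 1))) :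
    phi (n + 1) x 0 = x 0 * √(1 - ‖phi n (tail x)‖ ^ 2) := by
  rw [phi]; rfl

lemma phi_succ_apply_succ (n : ℕ) (x : EuclideanSpace ℝ (Fin (n + 1))) (i : Fin n) :
    phi (n + 1) x i.succ = phi n (tail x) i := by
  rw [phi]; rfl

lemma norm_phi_succ_sq (n : ℕ) (x : EuclideanSpace ℝ (Fin (n + 1))) :
    ‖phi (n + 1) x‖ ^ 2 = (x 0 * √(1 - ‖phi n (tail x)‖ ^ 2)) ^ 2 + ‖phi n (tail x)‖ ^ 2 := by
  simp only [EuclideanSpace.real_norm_sq_eq, Fin.sum_univ_succ, phi_succ_apply_zero,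
    phi_succ_apply_succ]

lemma one_sub_sq_nonneg {a : ℝ} (ha : |a| ≤ 1) : 0 ≤ 1 - a ^ 2 := by
  nlinarith [sq_abs a, abs_nonneg a]

lemma one_sub_sq_eq_zero {a : ℝ} (ha : |a| = 1) : 1 - a ^ 2 = 0 := by
  rw [← sq_abs, ha]; norm_num

lemma one_sub_norm_phi_sq {n : ℕ} {x : EuclideanSpace ℝ (Fin n)} (hx : x ∈ cube n) :
    1 - ‖phi n x‖ ^ 2 = ∏ i, (1 - x i ^ 2) := by
  induction n with
  | zero => simp [phi, EuclideanSpace.real_norm_sq_eq]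
  | succ n ih =>
    have htail := ih (tail_mem_cube hx)
    have hr : 0 ≤ 1 - ‖phi n (tail x)‖ ^ 2 :=
      htail ▸ prod_nonneg fun i _ => one_sub_sq_nonneg (hx i.succ)
    rw [norm_phi_succ_sq, mul_pow, Real.sq_sqrt hr, Fin.prod_univ_succ]
    simp only [tail_apply] at htail
    rw [← htail]
    ring

lemma phi_apply {n : ℕ} {x : EuclideanSpace ℝ (Fin n)} (hx : x ∈ cube n) (j : Fin n) :
    phi n x j = x j * √(∏ i > j, (1 - x i ^ 2)) := by
  induction n with
  | zero => exact j.elim0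
  | succ n ih =>
    cases j using Fin.cases with
    | zero =>
      rw [phi_succ_apply_zero, one_sub_norm_phi_sq (tail_mem_cube hx), Fin.prod_Ioi_zero]; rfl
    | succ j => rw [phi_succ_apply_succ, ih (tail_mem_cube hx), Fin.prod_Ioi_succ]; rfl

lemma norm_phi_eq_one {n : ℕ} {x : EuclideanSpace ℝ (Fin n)} (hx : x ∈ cube n) {i : Fin n}
    (hi : |x i| = 1) : ‖phi n x‖ = 1 := by
  have hsq : ‖phi n x‖ ^ 2 = 1 := by
    have := one_sub_norm_phi_sq hx
    rw [prod_eq_zero (mem_univ i) (one_sub_sq_eq_zero hi)] at this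
    linarith
  exact (pow_eq_one_iff_of_nonneg (norm_nonneg _) two_ne_zero).mp hsq

lemma phi_apply_eq_zero {n : ℕ} {x : EuclideanSpace ℝ (Fin n)} (hx : x ∈ cube n) {i j : Fin n}
    (hji : j < i) (hi : |x i| = 1) : phi n x j = 0 := by
  rw [phi_apply hx, prod_eq_zero (mem_Ioi.mpr hji) (one_sub_sq_eq_zero hi)]
  simp

lemma exists_abs_eq_one_gt {n : ℕ} {x : EuclideanSpace ℝ (Fin n)} {m : ℕ}
    (hcard : m ≤ #{i | |x i| = 1}) {j : Fin n} (hj : (j : ℕ) + 1 < m) :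
    ∃ i, j < i ∧ |x i| = 1 := by
  obtain ⟨i, hi, hij⟩ := exists_mem_notMem_of_card_lt_card (s := Iic j)
    (t := {i | |x i| = 1}) (by rw [Fin.card_Iic]; omega)
  exact ⟨i, by simpa using hij, (mem_filter.mp hi).2⟩

theorem phi_filtered_general (n k : ℕ) (hk : k < n)
    (x : EuclideanSpace ℝ (Fin n)) (hx : x ∈ cube n)
    (hcard : n - k ≤ (Finset.univ.filter fun i : Fin n => |x i| = 1).card) :
    ‖phi n x‖ = 1 ∧ ∀ j : Fin n, (j : ℕ) < n - k - 1 → phi n x j = 0 := by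
  constructor
  · obtain ⟨i, hi⟩ := card_pos.mp (show 0 < #{i | |x i| = 1} by omega)
    exact norm_phi_eq_one hx (mem_filter.mp hi).2
  · intro j hj
    obtain ⟨i, hji, hi⟩ := exists_abs_eq_one_gt hcard (by omega : (j : ℕ) + 1 < n - k)
    exact phi_apply_eq_zero hx hji hi

/-- `φₙ` is a filtered map for the skeletal filtrations. If `0 ≤ k < n` and
`x ∈ Iⁿ` has at least `n − k` coordinates of absolute value `1` (i.e. `x` lies in the
`k`-skeleton of the cube), then `‖φₙ(x)‖ = 1` and the first `n − k − 1` coordinates of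
`φₙ(x)` vanish, i.e. `φₙ(x)` lies in the `k`-skeleton of the globe. -/
theorem phi_filtered (n k : ℕ) (hn : 1 ≤ n) (hk : k < n)
    (x : EuclideanSpace ℝ (Fin n)) (hx : x ∈ cube n)
    (hcard : n - k ≤ (Finset.univ.filter fun i : Fin n => |x i| = 1).card) :
    ‖phi n x‖ = 1 ∧ ∀ j : Fin n, (j : ℕ) < n - k - 1 → phi n x j = 0 :=
  phi_filtered_general n k hk x hx hcard
end

section
/- Characterization of the identifications made by φₙ: for every n ≥ 2 and all points (t,y), (t',y') ∈ Iⁿ with t,t' ∈ [−1,1] and y,y' ∈ Iⁿ⁻¹, one has φₙ(t,y) = φₙ(t',y') if and only if φₙ₋₁(y) = φₙ₋₁(y') and (t = t' or ‖φₙ₋₁(y)‖ = 1). -/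
theorem EuclideanSpace.norm_sq_toLp_cons {𝕜 : Type*} [RCLike 𝕜] {n : ℕ} (a : 𝕜)
    (v : EuclideanSpace 𝕜 (Fin n)) :
    ‖WithLp.toLp 2 (Fin.cons a v : Fin (n + 1) → 𝕜)‖ ^ 2 = ‖a‖ ^ 2 + ‖v‖ ^ 2 := by
  simp [EuclideanSpace.norm_sq_eq, Fin.sum_univ_succ]

theorem PiLp.toLp_cons_inj {p : ENNReal} {α : Type*} {n : ℕ} {a b : α}
    {v w : PiLp p fun _ : Fin n => α} :
    WithLp.toLp p (Fin.cons a v : Fin (n + 1) → α) = WithLp.toLp p (Fin.cons b w) ↔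
      a = b ∧ v = w := by
  rw [(WithLp.toLp_injective p).eq_iff, Fin.cons_inj]
  exact and_congr_right' (WithLp.ofLp_injective p).eq_iff

theorem Real.sqrt_one_sub_sq_eq_zero_iff {r : ℝ} (h₀ : 0 ≤ r) (h₁ : r ≤ 1) :
    √(1 - r ^ 2) = 0 ↔ r = 1 := by
  rw [Real.sqrt_eq_zero']
  constructor <;> intro h <;> nlinarith

theorem phi_succ_cons (n : ℕ) (t : ℝ) (y : EuclideanSpace ℝ (Fin n)) :
    phi (n + 1) (WithLp.toLp 2 (Fin.cons t y : Fin (n + 1) → ℝ))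
      = WithLp.toLp 2 (Fin.cons (t * √(1 - ‖phi n y‖ ^ 2)) (phi n y) : Fin (n + 1) → ℝ) := by
  simp [phi]

theorem norm_phi_le_one {n : ℕ} {x : EuclideanSpace ℝ (Fin n)} (hx : x ∈ cube n) :
    ‖phi n x‖ ≤ 1 := by
  induction n with
  | zero => simp [phi, Subsingleton.elim x 0]
  | succ n ih =>
    obtain ⟨t, y, rfl⟩ : ∃ t, ∃ y : EuclideanSpace ℝ (Fin n),
        x = WithLp.toLp 2 (Fin.cons t y : Fin (n + 1) → ℝ) :=
      ⟨x 0, WithLp.toLp 2 fun i => x i.succ, by ext i; cases i using Fin.cases <;> simp⟩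
    have hy : ‖phi n y‖ ≤ 1 := ih fun i => by simpa using hx i.succ
    have hs : 0 ≤ 1 - ‖phi n y‖ ^ 2 := by nlinarith [norm_nonneg (phi n y)]
    have ht2 : t ^ 2 ≤ 1 := (sq_le_one_iff_abs_le_one t).mpr (by simpa using hx 0)
    rw [phi_succ_cons, ← sq_le_one_iff₀ (norm_nonneg _), EuclideanSpace.norm_sq_toLp_cons,
      Real.norm_eq_abs, abs_mul, mul_pow, sq_abs, sq_abs, Real.sq_sqrt hs]
    linarith [mul_le_mul_of_nonneg_right ht2 hs]

theorem phi_eq_iff_general (n : ℕ) (t t' : ℝ)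
    (y y' : EuclideanSpace ℝ (Fin n)) (hy : y ∈ cube n) :
    phi (n + 1) (WithLp.toLp 2 (Fin.cons t y : Fin (n + 1) → ℝ))
        = phi (n + 1) (WithLp.toLp 2 (Fin.cons t' y' : Fin (n + 1) → ℝ)) ↔
      phi n y = phi n y' ∧ (t = t' ∨ ‖phi n y‖ = 1) := by
  rw [phi_succ_cons, phi_succ_cons, PiLp.toLp_cons_inj, and_comm]
  refine and_congr_right fun htail => ?_
  rw [← htail, mul_eq_mul_right_iff,
    Real.sqrt_one_sub_sq_eq_zero_iff (norm_nonneg _) (norm_phi_le_one hy)]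

/-- characterization of the identifications made by `φₙ` (`n ≥ 2`; here the
dimension is `n + 1` with `n ≥ 1`): `φₙ(t,y) = φₙ(t',y')` iff `φₙ₋₁(y) = φₙ₋₁(y')` and
(`t = t'` or `‖φₙ₋₁(y)‖ = 1`). -/
theorem phi_eq_iff (n : ℕ) (hn : 1 ≤ n) (t t' : ℝ) (ht : |t| ≤ 1) (ht' : |t'| ≤ 1)
    (y y' : EuclideanSpace ℝ (Fin n)) (hy : y ∈ cube n) (hy' : y' ∈ cube n) :
    phi (n + 1) (WithLp.toLp 2 (Fin.cons t y : Fin (n + 1) → ℝ))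
        = phi (n + 1) (WithLp.toLp 2 (Fin.cons t' y' : Fin (n + 1) → ℝ)) ↔
      phi n y = phi n y' ∧ (t = t' ∨ ‖phi n y‖ = 1) :=
  phi_eq_iff_general n t t' y y' hy
end
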